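/- The complete elliptic integral of the first kind K satisfies the ODE x(x²−1)K″(x) + (3x²−1)K′(x) + x·K(x) = 0 for 0 < x < 1. -/

import Mathlib

/-!
Write `K(k) = ∫₀¹ (1 - t²)^{-1/2} (1 - k²t²)^{-1/2} dt`. The weight `(1 - t²)^{-1/2}` is integrable
(it is the derivative of `arcsin`) and the kernel `(1 - k²t²)^{-1/2}` is smooth on `|k t| < 1`, so
both `k`-derivatives pass under the integral, the derivatives of the kernel being bounded on compact
sets. Applied to the integrand, the differential operator of the equation gives the exact
`t`-derivative of `k t √(1 - t²) / (1 - k²t²)^{3/2}`, which vanishes at `t = 0` and `t = 1`.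
-/

noncomputable def ellipticK (k : ℝ) : ℝ :=
  ∫ t in (0:ℝ)..1, 1 / Real.sqrt ((1 - t^2) * (1 - k^2 * t^2))

open MeasureTheory Set Function Filter Topology Real intervalIntegral
open scoped Interval

theorem intervalIntegrable_one_div_sqrt_one_sub_sq {a b : ℝ} (ha : a ∈ Icc (-1 : ℝ) 1)
    (hb : b ∈ Icc (-1 : ℝ) 1) : IntervalIntegrable (fun t => 1 / √(1 - t ^ 2)) volume a b := by
  have hsub : Ioo (min a b) (max a b) ⊆ Ioo (-1) 1 :=
    Ioo_subset_Ioo (le_min ha.1 hb.1) (max_le ha.2 hb.2)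
  exact intervalIntegrable_deriv_of_nonneg continuous_arcsin.continuousOn
    (fun t ht => hasDerivAt_arcsin (hsub ht).1.ne' (hsub ht).2.ne) fun t _ => by positivity

theorem hasDerivAt_integral_mul_of_continuousOn {w : ℝ → ℝ} {f f' : ℝ → ℝ → ℝ} {s : Set ℝ}
    {a b x : ℝ} (hw : IntervalIntegrable w volume a b) (hs : IsCompact s) (hsx : s ∈ 𝓝 x)
    (hf : ContinuousOn (uncurry f) (s ×ˢ [[a, b]]))
    (hf' : ContinuousOn (uncurry f') (s ×ˢ [[a, b]]))
    (hderiv : ∀ k ∈ s, ∀ t ∈ [[a, b]], HasDerivAt (f · t) (f' k t) k) :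
    HasDerivAt (fun k => ∫ t in a..b, w t * f k t) (∫ t in a..b, w t * f' x t) x := by
  have hint {g : ℝ → ℝ → ℝ} (hg : ContinuousOn (uncurry g) (s ×ˢ [[a, b]])) {k : ℝ}
      (hk : k ∈ s) : IntervalIntegrable (fun t => w t * g k t) volume a b :=
    hw.mul_continuousOn <| hg.comp (Continuous.prodMk_right k).continuousOn fun t ht => ⟨hk, ht⟩
  obtain ⟨C, hC⟩ := (hs.prod isCompact_uIcc).exists_bound_of_continuousOn hf'
  refine (hasDerivAt_integral_of_dominated_loc_of_deriv_le
    (F := fun k t => w t * f k t) (F' := fun k t => w t * f' k t) (bound := fun t => ‖w t‖ * C)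
    hsx ?_ (hint hf (mem_of_mem_nhds hsx))
    (hint hf' (mem_of_mem_nhds hsx)).def'.aestronglyMeasurable ?_ (hw.norm.mul_const C) ?_).2
  · filter_upwards [hsx] with k hk using (hint hf hk).def'.aestronglyMeasurable
  · refine .of_forall fun t ht k hk => ?_
    rw [norm_mul]
    exact mul_le_mul_of_nonneg_left (hC (k, t) ⟨hk, uIoc_subset_uIcc ht⟩) (norm_nonneg _)
  · exact .of_forall fun t ht k hk => (hderiv k hk t (uIoc_subset_uIcc ht)).const_mul (w t)

theorem sq_mul_sq_lt_one {k t : ℝ} (hk : |k| < 1) (ht : |t| ≤ 1) : k ^ 2 * t ^ 2 < 1 := by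
  rw [← mul_pow, ← sq_abs, abs_mul]
  exact pow_lt_one₀ (by positivity) (mul_lt_one_of_nonneg_of_lt_one_left (abs_nonneg k) hk ht)
    two_ne_zero

noncomputable def ellipticKernel (k t : ℝ) : ℝ := (√(1 - k ^ 2 * t ^ 2))⁻¹

noncomputable def ellipticKernel' (k t : ℝ) : ℝ := k * t ^ 2 / √(1 - k ^ 2 * t ^ 2) ^ 3

noncomputable def ellipticKernel'' (k t : ℝ) : ℝ :=
  t ^ 2 / √(1 - k ^ 2 * t ^ 2) ^ 3 + 3 * k ^ 2 * t ^ 4 / √(1 - k ^ 2 * t ^ 2) ^ 5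

theorem ellipticK_eq_integral (k : ℝ) :
    ellipticK k = ∫ t in (0 : ℝ)..1, 1 / √(1 - t ^ 2) * ellipticKernel k t := by
  refine integral_congr fun t ht => ?_
  rw [uIcc_of_le zero_le_one] at ht
  have : 0 ≤ 1 - t ^ 2 := by nlinarith [ht.1, ht.2]
  simp only [ellipticKernel, sqrt_mul this, one_div, mul_inv]

section Kernel

variable {k t : ℝ}

theorem continuous_sqrt_one_sub_sq_mul_sq :
    Continuous fun p : ℝ × ℝ => √(1 - p.1 ^ 2 * p.2 ^ 2) := by
  fun_prop

theorem sqrt_one_sub_sq_mul_sq_ne_zero (h : k ^ 2 * t ^ 2 < 1) : √(1 - k ^ 2 * t ^ 2) ≠ 0 :=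
  (sqrt_pos.2 (by linarith)).ne'

theorem continuousOn_ellipticKernel :
    ContinuousOn (uncurry ellipticKernel) {p | p.1 ^ 2 * p.2 ^ 2 < 1} :=
  continuous_sqrt_one_sub_sq_mul_sq.continuousOn.inv₀ fun _ hp => sqrt_one_sub_sq_mul_sq_ne_zero hp

theorem continuousOn_ellipticKernel' :
    ContinuousOn (uncurry ellipticKernel') {p | p.1 ^ 2 * p.2 ^ 2 < 1} :=
  (by fun_prop : Continuous fun p : ℝ × ℝ => p.1 * p.2 ^ 2).continuousOn.div
    (continuous_sqrt_one_sub_sq_mul_sq.continuousOn.pow 3)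
    fun _ hp => pow_ne_zero _ (sqrt_one_sub_sq_mul_sq_ne_zero hp)

theorem continuousOn_ellipticKernel'' :
    ContinuousOn (uncurry ellipticKernel'') {p | p.1 ^ 2 * p.2 ^ 2 < 1} :=
  ((by fun_prop : Continuous fun p : ℝ × ℝ => p.2 ^ 2).continuousOn.div
    (continuous_sqrt_one_sub_sq_mul_sq.continuousOn.pow 3)
    fun _ hp => pow_ne_zero _ (sqrt_one_sub_sq_mul_sq_ne_zero hp)).add
  ((by fun_prop : Continuous fun p : ℝ × ℝ => 3 * p.1 ^ 2 * p.2 ^ 4).continuousOn.div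
    (continuous_sqrt_one_sub_sq_mul_sq.continuousOn.pow 5)
    fun _ hp => pow_ne_zero _ (sqrt_one_sub_sq_mul_sq_ne_zero hp))

theorem hasDerivAt_sqrt_one_sub_sq_mul_sq (h : k ^ 2 * t ^ 2 < 1) :
    HasDerivAt (fun k => √(1 - k ^ 2 * t ^ 2)) (-(k * t ^ 2) / √(1 - k ^ 2 * t ^ 2)) k := by
  refine ((((hasDerivAt_pow 2 k).mul_const (t ^ 2)).const_sub 1).sqrt
    (by linarith)).congr_deriv ?_
  field_simp
  ring

theorem hasDerivAt_ellipticKernel (h : k ^ 2 * t ^ 2 < 1) :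
    HasDerivAt (ellipticKernel · t) (ellipticKernel' k t) k := by
  have hq := sqrt_one_sub_sq_mul_sq_ne_zero h
  refine ((hasDerivAt_sqrt_one_sub_sq_mul_sq h).inv hq).congr_deriv ?_
  rw [ellipticKernel']
  field_simp

theorem hasDerivAt_ellipticKernel' (h : k ^ 2 * t ^ 2 < 1) :
    HasDerivAt (ellipticKernel' · t) (ellipticKernel'' k t) k := by
  have hq := sqrt_one_sub_sq_mul_sq_ne_zero h
  refine (((hasDerivAt_id k).mul_const (t ^ 2)).div
    ((hasDerivAt_sqrt_one_sub_sq_mul_sq h).pow 3) (pow_ne_zero 3 hq)).congr_deriv ?_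
  simp only [ellipticKernel'', Pi.pow_apply, id]
  generalize √(1 - k ^ 2 * t ^ 2) = q at hq ⊢
  field_simp
  ring

theorem hasDerivAt_ellipticKernel_ode_primitive (ht : t ^ 2 < 1) (h : k ^ 2 * t ^ 2 < 1) :
    HasDerivAt (fun t => k * t * √(1 - t ^ 2) / √(1 - k ^ 2 * t ^ 2) ^ 3)
      (1 / √(1 - t ^ 2) * (k * (k ^ 2 - 1) * ellipticKernel'' k t
        + (3 * k ^ 2 - 1) * ellipticKernel' k t + k * ellipticKernel k t)) t := by
  have hs : √(1 - t ^ 2) ≠ 0 := (sqrt_pos.2 (by linarith)).ne'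
  have hq := sqrt_one_sub_sq_mul_sq_ne_zero h
  have hs2 : √(1 - t ^ 2) ^ 2 = 1 - t ^ 2 := sq_sqrt (by linarith)
  have hq2 : √(1 - k ^ 2 * t ^ 2) ^ 2 = 1 - k ^ 2 * t ^ 2 := sq_sqrt (by linarith)
  refine ((((hasDerivAt_id t).const_mul k).mul
    (((hasDerivAt_pow 2 t).const_sub 1).sqrt (by linarith))).div
    (((((hasDerivAt_pow 2 t).const_mul (k ^ 2)).const_sub 1).sqrt (by linarith)).pow 3)
    (pow_ne_zero 3 hq)).congr_deriv ?_
  simp only [ellipticKernel, ellipticKernel', ellipticKernel'', id, Pi.pow_apply, Pi.mul_apply,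
    Nat.cast_ofNat, Nat.add_one_sub_one, pow_one]
  generalize √(1 - t ^ 2) = s at hs hs2 ⊢
  generalize √(1 - k ^ 2 * t ^ 2) = q at hq hq2 ⊢
  field_simp
  linear_combination (k * q ^ 2 + 3 * k ^ 3 * t ^ 2) * hs2
    + (k - k * (q ^ 2 + 1 - k ^ 2 * t ^ 2) - 4 * k ^ 3 * t ^ 2) * hq2

end Kernel

theorem hasDerivAt_integral_one_div_sqrt_mul {g g' : ℝ → ℝ → ℝ}
    (hg : ContinuousOn (uncurry g) {p | p.1 ^ 2 * p.2 ^ 2 < 1})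
    (hg' : ContinuousOn (uncurry g') {p | p.1 ^ 2 * p.2 ^ 2 < 1})
    (hderiv : ∀ k t, k ^ 2 * t ^ 2 < 1 → HasDerivAt (g · t) (g' k t) k) {x : ℝ} (hx : |x| < 1) :
    HasDerivAt (fun k => ∫ t in (0 : ℝ)..1, 1 / √(1 - t ^ 2) * g k t)
      (∫ t in (0 : ℝ)..1, 1 / √(1 - t ^ 2) * g' x t) x := by
  obtain ⟨ρ, hxρ, hρ⟩ := exists_between hx
  have hsub : Icc (-ρ) ρ ×ˢ [[(0 : ℝ), 1]] ⊆ {p | p.1 ^ 2 * p.2 ^ 2 < 1} := by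
    rintro ⟨k, t⟩ ⟨hk, ht⟩
    rw [uIcc_of_le zero_le_one] at ht
    exact sq_mul_sq_lt_one ((abs_le.2 hk).trans_lt hρ) (abs_le.2 ⟨by linarith [ht.1], ht.2⟩)
  exact hasDerivAt_integral_mul_of_continuousOn
    (intervalIntegrable_one_div_sqrt_one_sub_sq (by norm_num) (by norm_num)) isCompact_Icc
    (Icc_mem_nhds (abs_lt.1 hxρ).1 (abs_lt.1 hxρ).2) (hg.mono hsub) (hg'.mono hsub)
    fun k hk t ht => hderiv k t (@hsub (k, t) ⟨hk, ht⟩)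

theorem ellipticKernel_ode_integral {k : ℝ} (hk : |k| < 1) :
    k * (k ^ 2 - 1) * (∫ t in (0 : ℝ)..1, 1 / √(1 - t ^ 2) * ellipticKernel'' k t)
      + (3 * k ^ 2 - 1) * (∫ t in (0 : ℝ)..1, 1 / √(1 - t ^ 2) * ellipticKernel' k t)
      + k * (∫ t in (0 : ℝ)..1, 1 / √(1 - t ^ 2) * ellipticKernel k t) = 0 := by
  have h01 : [[(0 : ℝ), 1]] = Icc 0 1 := uIcc_of_le zero_le_one
  have hkt (t : ℝ) (ht : t ∈ Icc 0 1) : k ^ 2 * t ^ 2 < 1 :=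
    sq_mul_sq_lt_one hk (abs_le.2 ⟨by linarith [ht.1], ht.2⟩)
  have slice {g : ℝ → ℝ → ℝ} (hg : ContinuousOn (uncurry g) {p | p.1 ^ 2 * p.2 ^ 2 < 1}) :
      ContinuousOn (g k) [[0, 1]] :=
    hg.comp (Continuous.prodMk_right k).continuousOn fun t ht => hkt t (h01 ▸ ht)
  have hw : IntervalIntegrable (fun t => 1 / √(1 - t ^ 2)) volume 0 1 :=
    intervalIntegrable_one_div_sqrt_one_sub_sq (by norm_num) (by norm_num)
  have hI {g : ℝ → ℝ → ℝ} (hg : ContinuousOn (uncurry g) {p | p.1 ^ 2 * p.2 ^ 2 < 1}) :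
      IntervalIntegrable (fun t => 1 / √(1 - t ^ 2) * g k t) volume 0 1 :=
    hw.mul_continuousOn (slice hg)
  have hL : ContinuousOn (fun t => k * (k ^ 2 - 1) * ellipticKernel'' k t
      + (3 * k ^ 2 - 1) * ellipticKernel' k t + k * ellipticKernel k t) [[0, 1]] :=
    ((continuousOn_const.mul (slice continuousOn_ellipticKernel'')).add
      (continuousOn_const.mul (slice continuousOn_ellipticKernel'))).add
      (continuousOn_const.mul (slice continuousOn_ellipticKernel))
  have hprim :
      ContinuousOn (fun t => k * t * √(1 - t ^ 2) / √(1 - k ^ 2 * t ^ 2) ^ 3) (Icc 0 1) :=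
    (by fun_prop : Continuous fun t : ℝ => k * t * √(1 - t ^ 2)).continuousOn.div
      (by fun_prop : Continuous fun t : ℝ => √(1 - k ^ 2 * t ^ 2) ^ 3).continuousOn
      fun t ht => pow_ne_zero 3 (sqrt_one_sub_sq_mul_sq_ne_zero (hkt t ht))
  calc _ = ∫ t in (0 : ℝ)..1, 1 / √(1 - t ^ 2) * (k * (k ^ 2 - 1) * ellipticKernel'' k t
        + (3 * k ^ 2 - 1) * ellipticKernel' k t + k * ellipticKernel k t) := by
        simp only [mul_add, mul_left_comm (1 / √(1 - _ ^ 2))]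
        rw [intervalIntegral.integral_add, intervalIntegral.integral_add,
          intervalIntegral.integral_const_mul, intervalIntegral.integral_const_mul,
          intervalIntegral.integral_const_mul]
        exacts [(hI continuousOn_ellipticKernel'').const_mul _,
          (hI continuousOn_ellipticKernel').const_mul _,
          ((hI continuousOn_ellipticKernel'').const_mul _).add
            ((hI continuousOn_ellipticKernel').const_mul _),
          (hI continuousOn_ellipticKernel).const_mul _]
    _ = 0 := by
        rw [integral_eq_sub_of_hasDerivAt_of_le zero_le_one hprim
          (fun t ht => hasDerivAt_ellipticKernel_ode_primitive (by nlinarith [ht.1, ht.2])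
            (hkt t (Ioo_subset_Icc_self ht))) (hw.mul_continuousOn hL)]
        simp

theorem stmt19 (x : ℝ) (hx0 : 0 < x) (hx1 : x < 1) :
    x * (x^2 - 1) * iteratedDeriv 2 ellipticK x
      + (3 * x^2 - 1) * deriv ellipticK x
      + x * ellipticK x = 0 := by
  have hx : |x| < 1 := abs_lt.2 ⟨by linarith, hx1⟩
  have hK' : deriv ellipticK =ᶠ[𝓝 x]
      fun k => ∫ t in (0 : ℝ)..1, 1 / √(1 - t ^ 2) * ellipticKernel' k t := by
    filter_upwards [(isOpen_lt continuous_abs continuous_const).mem_nhds hx] with k hk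
    rw [funext ellipticK_eq_integral]
    exact (hasDerivAt_integral_one_div_sqrt_mul continuousOn_ellipticKernel
      continuousOn_ellipticKernel' (fun _ _ => hasDerivAt_ellipticKernel) hk).deriv
  rw [iteratedDeriv_succ, iteratedDeriv_one, hK'.deriv_eq, hK'.eq_of_nhds,
    (hasDerivAt_integral_one_div_sqrt_mul continuousOn_ellipticKernel'
      continuousOn_ellipticKernel'' (fun _ _ => hasDerivAt_ellipticKernel') hx).deriv,
    ellipticK_eq_integral]
  exact ellipticKernel_ode_integral hx
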